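/- arXiv:2311.01068 — 3 statements merged into one kernel-verified Lean document; each statement's English description precedes it below -/
import Mathlib

section
/- Let D be a self-adjoint operator on a Hilbert space H and B a bounded operator satisfying Re ⟨Bu, u⟩ ≥ λ‖u‖² for all u in the closure of the range of D, with λ > 0. Then for every nonzero real t, the operator I + itBD (with domain D(D)) is invertible with bounded inverse, and ‖(I + itBD)^{-1}‖ is bounded uniformly in t by a constant depending only on λ and ‖B‖. -/
open scoped InnerProductSpace ComplexConjugate

/-!
For purely imaginary `c`, pair `u + c • B (D u)` with `c • D u`: since `⟪u, D u⟫` is real, the real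
part is `‖c‖² Re ⟪B (D u), D u⟫ ≥ λ ‖c • D u‖²`, which bounds `λ ‖c • D u‖`, and then `‖u‖`, by
`‖u + c • B (D u)‖`. On the graph of `D`, which is closed, the map `(u, D u) ↦ u + c • B (D u)` is
thus bounded below and has closed range. Its range is also dense: a vector `v` orthogonal to it
satisfies `v = D (c • B* v)`, so `Re ⟪B v, v⟫ = Re ⟪v, B* v⟫ = 0` and accretivity forces `v = 0`.
-/

namespace LinearPMap

section Graph

variable {R E F : Type*} [Ring R] [AddCommGroup E] [Module R E] [AddCommGroup F] [Module R F]

variable (f : E →ₗ.[R] F) in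
def toGraph (x : f.domain) : f.graph := ⟨((x : E), f x), f.mem_graph x⟩

theorem toGraph_bijective {f : E →ₗ.[R] F} : Function.Bijective (toGraph f) := by
  refine ⟨fun x y h => Subtype.ext (congrArg (fun p : f.graph => (p : E × F).1) h), ?_⟩
  rintro ⟨⟨x, y⟩, hp⟩
  obtain ⟨u, rfl, rfl⟩ := f.mem_graph_iff.1 hp
  exact ⟨u, rfl⟩

end Graph

variable {H : Type*} [NormedAddCommGroup H] [InnerProductSpace ℂ H]

variable (D : H →ₗ.[ℂ] H) (B : H →L[ℂ] H) (c : ℂ) in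
/-- The operator `1 + c B D` in graph coordinates: `(x, D x) ↦ x + c • B (D x)`. -/
def graphAddSmulComp : D.graph →L[ℂ] H :=
  (ContinuousLinearMap.fst ℂ H H + c • B ∘L ContinuousLinearMap.snd ℂ H H) ∘L D.graph.subtypeL

theorem graphAddSmulComp_toGraph {D : H →ₗ.[ℂ] H} {B : H →L[ℂ] H} {c : ℂ} (u : D.domain) :
    graphAddSmulComp D B c (toGraph D u) = (u : H) + c • B (D u) :=
  rfl

variable [CompleteSpace H] {D : H →ₗ.[ℂ] H}

theorem _root_.IsSelfAdjoint.isFormalAdjoint (hD : IsSelfAdjoint D) : D.IsFormalAdjoint D := by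
  have h := adjoint_isFormalAdjoint (T := D) hD.dense_domain
  rwa [isSelfAdjoint_def.mp hD] at h

theorem _root_.IsSelfAdjoint.re_mul_inner_apply_self (hD : IsSelfAdjoint D) {c : ℂ}
    (hc : c.re = 0) (x : D.domain) : (c * ⟪(x : H), D x⟫_ℂ).re = 0 := by
  have hreal : conj ⟪(x : H), D x⟫_ℂ = ⟪(x : H), D x⟫_ℂ := by
    rw [inner_conj_symm, hD.isFormalAdjoint]
  simp [Complex.mul_re, hc, Complex.conj_eq_iff_im.mp hreal]

theorem _root_.IsSelfAdjoint.exists_apply_eq_of_inner_eq (hD : IsSelfAdjoint D) {y w : H}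
    (h : ∀ x : D.domain, ⟪w, (x : H)⟫_ℂ = ⟪y, D x⟫_ℂ) : ∃ x : D.domain, (x : H) = y ∧ D x = w := by
  rw [← isSelfAdjoint_def.mp hD]
  exact ⟨⟨y, mem_adjoint_domain_of_exists y ⟨w, h⟩⟩, rfl, adjoint_apply_eq hD.dense_domain _ h⟩

variable {B : H →L[ℂ] H} {c : ℂ} {lam : ℝ}

theorem mul_norm_smul_apply_le (hD : IsSelfAdjoint D)
    (hB : ∀ u : D.domain, lam * ‖D u‖ ^ 2 ≤ (⟪B (D u), D u⟫_ℂ).re) (hc : c.re = 0)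
    (u : D.domain) : lam * ‖c • D u‖ ≤ ‖(u : H) + c • B (D u)‖ := by
  set v := (u : H) + c • B (D u)
  have hexpand : c * ⟪v, D u⟫_ℂ = c * ⟪(u : H), D u⟫_ℂ + (‖c‖ ^ 2 : ℝ) * ⟪B (D u), D u⟫_ℂ := by
    rw [inner_add_left, inner_smul_left, mul_add, ← mul_assoc, Complex.mul_conj,
      Complex.normSq_eq_norm_sq]
  have hlower : ‖c‖ ^ 2 * (lam * ‖D u‖ ^ 2) ≤ (c * ⟪v, D u⟫_ℂ).re := by
    rw [hexpand, Complex.add_re, hD.re_mul_inner_apply_self hc, zero_add, Complex.re_ofReal_mul]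
    exact mul_le_mul_of_nonneg_left (hB u) (sq_nonneg _)
  have hupper : (c * ⟪v, D u⟫_ℂ).re ≤ ‖c‖ * (‖v‖ * ‖D u‖) :=
    calc (c * ⟪v, D u⟫_ℂ).re ≤ ‖c * ⟪v, D u⟫_ℂ‖ := Complex.re_le_norm _
      _ = ‖c‖ * ‖⟪v, D u⟫_ℂ‖ := norm_mul _ _
      _ ≤ ‖c‖ * (‖v‖ * ‖D u‖) := by gcongr; exact norm_inner_le_norm _ _
  have hsq : ‖c • D u‖ * (lam * ‖c • D u‖) ≤ ‖c • D u‖ * ‖v‖ :=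
    calc ‖c • D u‖ * (lam * ‖c • D u‖) = ‖c‖ ^ 2 * (lam * ‖D u‖ ^ 2) := by rw [norm_smul]; ring
      _ ≤ ‖c‖ * (‖v‖ * ‖D u‖) := hlower.trans hupper
      _ = ‖c • D u‖ * ‖v‖ := by rw [norm_smul]; ring
  rcases (norm_nonneg (c • D u)).eq_or_lt with h0 | hpos
  · rw [← h0, mul_zero]
    exact norm_nonneg v
  · exact le_of_mul_le_mul_left hsq hpos

theorem norm_le_mul_norm_add_smul_apply (hD : IsSelfAdjoint D) (hlam : 0 < lam)
    (hB : ∀ u : D.domain, lam * ‖D u‖ ^ 2 ≤ (⟪B (D u), D u⟫_ℂ).re) (hc : c.re = 0)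
    (u : D.domain) : ‖(u : H)‖ ≤ (1 + ‖B‖ / lam) * ‖(u : H) + c • B (D u)‖ := by
  set v := (u : H) + c • B (D u)
  have hDu : ‖c • D u‖ ≤ ‖v‖ / lam := (le_div_iff₀' hlam).2 (mul_norm_smul_apply_le hD hB hc u)
  calc ‖(u : H)‖ = ‖v - B (c • D u)‖ := by simp [v]
    _ ≤ ‖v‖ + ‖B (c • D u)‖ := norm_sub_le _ _
    _ ≤ ‖v‖ + ‖B‖ * ‖c • D u‖ := by gcongr; exact B.le_opNorm _
    _ ≤ ‖v‖ + ‖B‖ * (‖v‖ / lam) := by gcongr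
    _ = (1 + ‖B‖ / lam) * ‖v‖ := by ring

theorem antilipschitz_graphAddSmulComp (hD : IsSelfAdjoint D) (hlam : 0 < lam)
    (hB : ∀ u : D.domain, lam * ‖D u‖ ^ 2 ≤ (⟪B (D u), D u⟫_ℂ).re) (hc : c.re = 0) (hc0 : c ≠ 0) :
    ∃ K, AntilipschitzWith K (graphAddSmulComp D B c) := by
  have hcpos : 0 < ‖c‖ := norm_pos_iff.2 hc0
  refine antilipschitzWith_iff_exists_mul_le_norm.2
    ⟨min (lam * ‖c‖) (1 + ‖B‖ / lam)⁻¹, lt_min (by positivity) (by positivity), fun p => ?_⟩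
  obtain ⟨u, rfl⟩ := toGraph_bijective.2 p
  have hu := norm_le_mul_norm_add_smul_apply hD hlam hB hc u
  have hDu := mul_norm_smul_apply_le hD hB hc u
  rw [norm_smul, ← mul_assoc] at hDu
  change _ * max ‖(u : H)‖ ‖D u‖ ≤ _
  rw [graphAddSmulComp_toGraph, mul_max_of_nonneg _ _ (by positivity)]
  refine max_le ?_ ?_
  · calc min (lam * ‖c‖) (1 + ‖B‖ / lam)⁻¹ * ‖(u : H)‖
        ≤ (1 + ‖B‖ / lam)⁻¹ * ‖(u : H)‖ := by gcongr; exact min_le_right _ _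
      _ ≤ ‖(u : H) + c • B (D u)‖ := (inv_mul_le_iff₀ (by positivity)).2 hu
  · calc min (lam * ‖c‖) (1 + ‖B‖ / lam)⁻¹ * ‖D u‖
        ≤ lam * ‖c‖ * ‖D u‖ := by gcongr; exact min_le_left _ _
      _ ≤ ‖(u : H) + c • B (D u)‖ := hDu

theorem eq_zero_of_forall_inner_add_smul_apply_eq_zero (hD : IsSelfAdjoint D) (hlam : 0 < lam)
    (hB : ∀ u : D.domain, lam * ‖D u‖ ^ 2 ≤ (⟪B (D u), D u⟫_ℂ).re) (hc : c.re = 0) (hc0 : c ≠ 0)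
    {v : H} (hv : ∀ u : D.domain, ⟪(u : H) + c • B (D u), v⟫_ℂ = 0) : v = 0 := by
  have hconj : conj c = -c := by apply Complex.ext <;> simp [hc]
  obtain ⟨y, hy, hDy⟩ : ∃ y : D.domain, (y : H) = B.adjoint v ∧ D y = c⁻¹ • v := by
    refine hD.exists_apply_eq_of_inner_eq fun x => ?_
    have hx : ⟪(x : H), v⟫_ℂ = c * ⟪D x, B.adjoint v⟫_ℂ := by
      have := hv x
      rw [inner_add_left, inner_smul_left, hconj, ← B.adjoint_inner_right] at this
      linear_combination this
    rw [inner_smul_left, ← inner_conj_symm, hx, ← map_mul, inv_mul_cancel_left₀ hc0,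
      inner_conj_symm]
  have hvy : D (c • y) = v := by rw [map_smul, hDy, smul_inv_smul₀ hc0]
  have hre : (⟪B v, v⟫_ℂ).re = 0 := by
    rw [← B.adjoint_inner_right, ← hy, ← hvy, map_smul, inner_smul_left, hD.isFormalAdjoint]
    exact hD.re_mul_inner_apply_self (by simp [hc]) y
  have hacc := hB (c • y)
  rw [hvy, hre] at hacc
  by_contra hv0
  have : 0 < lam * ‖v‖ ^ 2 := by have := norm_pos_iff.2 hv0; positivity
  linarith

theorem topologicalClosure_range_graphAddSmulComp (hD : IsSelfAdjoint D) (hlam : 0 < lam)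
    (hB : ∀ u : D.domain, lam * ‖D u‖ ^ 2 ≤ (⟪B (D u), D u⟫_ℂ).re) (hc : c.re = 0) (hc0 : c ≠ 0) :
    (graphAddSmulComp D B c).range.topologicalClosure = ⊤ := by
  rw [Submodule.topologicalClosure_eq_top_iff, Submodule.eq_bot_iff]
  intro v hv
  exact eq_zero_of_forall_inner_add_smul_apply_eq_zero hD hlam hB hc hc0 fun u =>
    (Submodule.mem_orthogonal _ _).1 hv _ ⟨toGraph D u, rfl⟩

theorem bijective_graphAddSmulComp (hD : IsSelfAdjoint D) (hlam : 0 < lam)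
    (hB : ∀ u : D.domain, lam * ‖D u‖ ^ 2 ≤ (⟪B (D u), D u⟫_ℂ).re) (hc : c.re = 0) (hc0 : c ≠ 0) :
    Function.Bijective (graphAddSmulComp D B c) :=
  haveI : CompleteSpace D.graph := IsClosed.completeSpace_coe (hs := hD.isClosed)
  (ContinuousLinearMap.bijective_iff_dense_range_and_antilipschitz _).2
    ⟨topologicalClosure_range_graphAddSmulComp hD hlam hB hc hc0,
      antilipschitz_graphAddSmulComp hD hlam hB hc hc0⟩

theorem existsUnique_add_smul_apply_eq (hD : IsSelfAdjoint D) (hlam : 0 < lam)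
    (hB : ∀ u : D.domain, lam * ‖D u‖ ^ 2 ≤ (⟪B (D u), D u⟫_ℂ).re) (hc : c.re = 0) (hc0 : c ≠ 0)
    (v : H) : ∃! u : D.domain, (u : H) + c • B (D u) = v :=
  ((bijective_graphAddSmulComp hD hlam hB hc hc0).comp toGraph_bijective).existsUnique v

end LinearPMap

/-- Let `D` be a self-adjoint operator on a Hilbert space `H` and `B` a
bounded operator with `Re ⟪Bu, u⟫ ≥ λ‖u‖²` for all `u` in the closure of the range of `D`,
`λ > 0`. Then for every real `t ≠ 0` the operator `I + itBD` (domain `D(D)`) is invertible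
with bounded inverse, uniformly in `t`: `‖(I + itBD)⁻¹‖ ≤ C(λ, ‖B‖)` where the constant
depends only on `λ` and `‖B‖`. -/
theorem bisectorial_resolvent_bound :
    ∃ C : ℝ → ℝ → ℝ,
      ∀ (H : Type) [NormedAddCommGroup H] [InnerProductSpace ℂ H] [CompleteSpace H]
        (D : H →ₗ.[ℂ] H) (B : H →L[ℂ] H) (lam : ℝ), 0 < lam →
        Dense (D.domain : Set H) → D.adjoint = D →
        (∀ u ∈ closure (Set.range fun w : D.domain => D w),
          lam * ‖u‖ ^ 2 ≤ (⟪B u, u⟫_ℂ).re) →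
        ∀ t : ℝ, t ≠ 0 →
          (∀ v : H, ∃! u : D.domain,
            (u : H) + ((t : ℂ) * Complex.I) • B (D u) = v) ∧
          (∀ u : D.domain,
            ‖(u : H)‖ ≤ C lam ‖B‖ *
              ‖(u : H) + ((t : ℂ) * Complex.I) • B (D u)‖) := by
  refine ⟨fun lam normB => 1 + normB / lam, ?_⟩
  intro H _ _ _ D B lam hlam _ hsa hB t ht
  have hD : IsSelfAdjoint D := hsa
  have hBD : ∀ u : D.domain, lam * ‖D u‖ ^ 2 ≤ (⟪B (D u), D u⟫_ℂ).re := fun u =>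
    hB _ (subset_closure ⟨u, rfl⟩)
  have hc : ((t : ℂ) * Complex.I).re = 0 := by simp
  have hc0 : (t : ℂ) * Complex.I ≠ 0 := by simp [ht]
  exact ⟨LinearPMap.existsUnique_add_smul_apply_eq hD hlam hBD hc hc0,
    LinearPMap.norm_le_mul_norm_add_smul_apply hD hlam hBD hc⟩
end

section
/- Let A be an (n+1)×(n+1) complex matrix written in block form A = [[A_⊥⊥, A_⊥∥],[A_∥⊥, A_∥∥]] with A_⊥⊥ ∈ ℂ invertible, and define B = [[1, 0],[A_∥⊥, A_∥∥]] · [[A_⊥⊥, A_⊥∥],[0, I]]^{-1}. Then the map A ↦ B is an involution: applying it twice returns A. -/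
/-!
Writing `A = [[a, b], [c, d]]` with `a` invertible, a block computation gives
`B = [[a⁻¹, -a⁻¹ b], [c a⁻¹, d - c a⁻¹ b]]`. The transform therefore acts on the blocks by
`(a, b, c, d) ↦ (a⁻¹, -a⁻¹ b, c a⁻¹, d - c a⁻¹ b)`, and applying this map twice returns
`(a, b, c, d)`.
-/

open Matrix

variable {n : ℕ}

/-- The transform `A ↦ B` of the first-order approach: with the block decomposition
`A = [[A_⊥⊥, A_⊥∥],[A_∥⊥, A_∥∥]]` corresponding to `ℂ^{1+n} = ℂ × ℂⁿ`, set
`B = [[1, 0],[A_∥⊥, A_∥∥]] · [[A_⊥⊥, A_⊥∥],[0, I]]⁻¹`. -/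
noncomputable def katoTransform (A : Matrix (Fin 1 ⊕ Fin n) (Fin 1 ⊕ Fin n) ℂ) :
    Matrix (Fin 1 ⊕ Fin n) (Fin 1 ⊕ Fin n) ℂ :=
  fromBlocks 1 0 A.toBlocks₂₁ A.toBlocks₂₂ *
    (fromBlocks A.toBlocks₁₁ A.toBlocks₁₂ 0 1)⁻¹

theorem Matrix.fromBlocks_one_zero_mul_inv_fromBlocks_zero_one
    {l m R : Type*} [Fintype l] [DecidableEq l] [Fintype m] [DecidableEq m] [CommRing R]
    {a : Matrix l l R} (b : Matrix l m R) (c : Matrix m l R) (d : Matrix m m R)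
    (ha : IsUnit a) :
    fromBlocks 1 0 c d * (fromBlocks a b 0 1)⁻¹ =
      fromBlocks a⁻¹ (-(a⁻¹ * b)) (c * a⁻¹) (d - c * a⁻¹ * b) := by
  have := ha.invertible
  have : Invertible (1 : Matrix m m R) := invertibleOne
  have := fromBlocksZero₂₁Invertible a b 1
  rw [mul_inv_eq_iff_eq_mul_of_invertible, fromBlocks_multiply]
  simp [Matrix.mul_assoc]

theorem katoTransform_eq_fromBlocks (A : Matrix (Fin 1 ⊕ Fin n) (Fin 1 ⊕ Fin n) ℂ)
    (hA : IsUnit A.toBlocks₁₁) :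
    katoTransform A =
      fromBlocks A.toBlocks₁₁⁻¹ (-(A.toBlocks₁₁⁻¹ * A.toBlocks₁₂))
        (A.toBlocks₂₁ * A.toBlocks₁₁⁻¹)
        (A.toBlocks₂₂ - A.toBlocks₂₁ * A.toBlocks₁₁⁻¹ * A.toBlocks₁₂) :=
  fromBlocks_one_zero_mul_inv_fromBlocks_zero_one _ _ _ hA

/-- If the scalar block `A_⊥⊥` is invertible, the map `A ↦ B` is an
involution: applying it twice returns `A`. -/
theorem katoTransform_involutive (A : Matrix (Fin 1 ⊕ Fin n) (Fin 1 ⊕ Fin n) ℂ)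
    (hA : IsUnit A.toBlocks₁₁) :
    katoTransform (katoTransform A) = A := by
  have := hA.invertible
  have hB : IsUnit (katoTransform A).toBlocks₁₁ := by
    rw [katoTransform_eq_fromBlocks A hA, toBlocks_fromBlocks₁₁]
    exact isUnit_nonsing_inv_iff.mpr hA
  rw [katoTransform_eq_fromBlocks _ hB, katoTransform_eq_fromBlocks A hA]
  conv_rhs => rw [← fromBlocks_toBlocks A]
  simp only [toBlocks_fromBlocks₁₁, toBlocks_fromBlocks₁₂, toBlocks_fromBlocks₂₁,
    toBlocks_fromBlocks₂₂, inv_inv_of_invertible, Matrix.mul_neg, neg_neg,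
    mul_inv_cancel_left_of_invertible, inv_mul_cancel_right_of_invertible]
  congr 1
  rw [Matrix.mul_assoc, sub_neg_eq_add, sub_add_cancel]
end

section
/- The dyadic Carleson embedding theorem: if μ is a nonnegative measure on ℝⁿ × (0,∞) such that μ(Q × (0, ℓ(Q))) ≤ C|Q| for every dyadic cube Q, and Sₜf(x) denotes the average of f over the dyadic cube of generation matching t containing x, then ∫∫ |Sₜf(x)|² dμ(x,t) ≤ 4C‖f‖₂² for all f ∈ L²(ℝⁿ). -/
/-!
Fix a finite set `s` of generations and let `M` be the dyadic maximal function of `φ = ‖f‖`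
over cubes of generation in `s`. At a level `λ`, every point `(x, t)` of the upper half space
at which the average of `φ` over the cube of scale `t` containing `x` exceeds `λ` lies in a
Carleson box `Q × (0, ℓ(Q))` over one of the maximal such cubes `Q`; these cubes are disjoint
and tile `{M > λ}`, so the Carleson condition gives `μ {S φ > λ} ≤ C |{M > λ}|`. Integrating
against `2λ dλ` (layer cake) turns this into `∫∫ (S φ)² dμ ≤ C ‖M‖₂²`. The same stopping cubes
give the weak-type bound `λ |{M > λ}| ≤ ∫_{M > λ} φ`, whence `‖M‖₂² ≤ 2 ∫ φ M ≤ 2 ‖φ‖₂ ‖M‖₂`,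
i.e. `‖M‖₂ ≤ 2 ‖φ‖₂` once `‖M‖₂` is known to be finite, which is what the truncation to
finitely many generations buys. Monotone convergence in `s` removes the truncation.
-/

open MeasureTheory Set
open scoped ENNReal

section LayerCake

lemma measurableSet_ofReal_lt (a : ℝ≥0∞) : MeasurableSet {l : ℝ | ENNReal.ofReal l < a} :=
  measurableSet_lt ENNReal.measurable_ofReal measurable_const

lemma setLIntegral_Ioi_indicator_eq_setLIntegral_Ioo {a : ℝ≥0∞} (ha : a ≠ ∞) (w : ℝ → ℝ≥0∞) :
    ∫⁻ l in Ioi 0, {l : ℝ | ENNReal.ofReal l < a}.indicator w l = ∫⁻ l in Ioo 0 a.toReal, w l := by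
  have hset : {l : ℝ | ENNReal.ofReal l < a} ∩ Ioi 0 = Ioo 0 a.toReal := by
    ext l
    simp only [mem_inter_iff, mem_ofPred_eq, mem_Ioi, mem_Ioo]
    exact ⟨fun h => ⟨h.2, (ENNReal.ofReal_lt_iff_lt_toReal h.2.le ha).1 h.1⟩,
      fun h => ⟨(ENNReal.ofReal_lt_iff_lt_toReal h.1.le ha).2 h.2, h.1⟩⟩
  rw [lintegral_indicator (measurableSet_ofReal_lt a), Measure.restrict_restrict
    (measurableSet_ofReal_lt a), hset]

lemma setLIntegral_Ioi_indicator_one (a : ℝ≥0∞) :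
    ∫⁻ l in Ioi 0, {l : ℝ | ENNReal.ofReal l < a}.indicator 1 l = a := by
  rcases eq_or_ne a ∞ with rfl | ha
  · simp [Real.volume_Ioi]
  · rw [setLIntegral_Ioi_indicator_eq_setLIntegral_Ioo ha, Pi.one_def, setLIntegral_const, one_mul,
      Real.volume_Ioo, sub_zero, ENNReal.ofReal_toReal ha]

lemma setLIntegral_Ioo_two_mul_ofReal {r : ℝ} (hr : 0 ≤ r) :
    ∫⁻ l in Ioo 0 r, 2 * ENNReal.ofReal l = ENNReal.ofReal r ^ 2 := by
  have hint : ∫ l in Ioo 0 r, 2 * l = r ^ 2 := by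
    rw [← integral_Ioc_eq_integral_Ioo, ← intervalIntegral.integral_of_le hr,
      intervalIntegral.integral_const_mul, integral_id]
    ring
  simp_rw [← ENNReal.ofReal_ofNat 2, ← ENNReal.ofReal_mul zero_le_two]
  rw [← ofReal_integral_eq_lintegral_ofReal, hint, ENNReal.ofReal_pow hr]
  · exact (intervalIntegral.intervalIntegrable_id.const_mul 2 |>.1).mono_set Ioo_subset_Ioc_self
  · exact ae_restrict_of_forall_mem measurableSet_Ioo fun l hl => by
      simp only [Pi.zero_apply]; linarith [hl.1]

lemma setLIntegral_Ioi_indicator_two_mul (a : ℝ≥0∞) :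
    ∫⁻ l in Ioi 0, {l : ℝ | ENNReal.ofReal l < a}.indicator (fun l => 2 * ENNReal.ofReal l) l =
      a ^ 2 := by
  rcases eq_or_ne a ∞ with rfl | ha
  · have hIoi : ∫⁻ _ in Ioi (1:ℝ), (1 : ℝ≥0∞) = ∞ := by simp [Real.volume_Ioi]
    simp only [ENNReal.ofReal_lt_top, ofPred_true, indicator_univ, ne_eq, OfNat.ofNat_ne_zero,
      not_false_eq_true, ENNReal.top_pow]
    refine top_le_iff.1 (hIoi ▸ (setLIntegral_mono' measurableSet_Ioi fun l hl => ?_).trans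
      (lintegral_mono_set (Ioi_subset_Ioi zero_le_one)))
    calc (1 : ℝ≥0∞) ≤ 2 * 1 := by norm_num
      _ ≤ 2 * ENNReal.ofReal l := by gcongr; exact ENNReal.one_le_ofReal.2 (le_of_lt hl)
  · rw [setLIntegral_Ioi_indicator_eq_setLIntegral_Ioo ha, setLIntegral_Ioo_two_mul_ofReal
      ENNReal.toReal_nonneg, ENNReal.ofReal_toReal ha]

variable {α : Type*} [MeasurableSpace α]

theorem lintegral_mul_setLIntegral_Ioi_indicator (ν : Measure α) [SFinite ν] {φ g : α → ℝ≥0∞}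
    (hφ : Measurable φ) (hg : Measurable g) {w : ℝ → ℝ≥0∞} (hw : Measurable w) :
    ∫⁻ x, φ x * (∫⁻ l in Ioi (0:ℝ), {l : ℝ | ENNReal.ofReal l < g x}.indicator w l) ∂ν =
      ∫⁻ l in Ioi (0:ℝ), w l * ∫⁻ x in {x | ENNReal.ofReal l < g x}, φ x ∂ν := by
  have hswap (x : α) (l : ℝ) : φ x * {l : ℝ | ENNReal.ofReal l < g x}.indicator w l =
      w l * {x | ENNReal.ofReal l < g x}.indicator φ x := by
    simp only [indicator_apply, mem_ofPred_eq]
    split_ifs <;> simp [mul_comm]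
  have hmeas (l : ℝ) : MeasurableSet {x | ENNReal.ofReal l < g x} :=
    measurableSet_lt measurable_const hg
  calc ∫⁻ x, φ x * (∫⁻ l in Ioi (0:ℝ), {l : ℝ | ENNReal.ofReal l < g x}.indicator w l) ∂ν
      = ∫⁻ x, (∫⁻ l in Ioi (0:ℝ), w l * {x | ENNReal.ofReal l < g x}.indicator φ x) ∂ν := by
        refine lintegral_congr fun x => ?_
        rw [← lintegral_const_mul _ (hw.indicator (measurableSet_ofReal_lt _))]
        simp_rw [hswap]
    _ = ∫⁻ l in Ioi (0:ℝ), ∫⁻ x, w l * {x | ENNReal.ofReal l < g x}.indicator φ x ∂ν := by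
        refine lintegral_lintegral_swap (Measurable.aemeasurable ?_)
        refine (hw.comp measurable_snd).mul (Measurable.indicator (hφ.comp measurable_fst) ?_)
        exact measurableSet_lt (by fun_prop) (hg.comp measurable_fst)
    _ = ∫⁻ l in Ioi (0:ℝ), w l * ∫⁻ x in {x | ENNReal.ofReal l < g x}, φ x ∂ν := by
        refine lintegral_congr fun l => ?_
        rw [lintegral_const_mul _ (hφ.indicator (hmeas l)), lintegral_indicator (hmeas l)]

theorem lintegral_sq_eq_setLIntegral_Ioi_mul_meas_lt (ν : Measure α) [SFinite ν] {g : α → ℝ≥0∞}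
    (hg : Measurable g) :
    ∫⁻ x, g x ^ 2 ∂ν =
      ∫⁻ l in Ioi (0:ℝ), 2 * ENNReal.ofReal l * ν {x | ENNReal.ofReal l < g x} := by
  have := lintegral_mul_setLIntegral_Ioi_indicator ν measurable_const hg
    (w := fun l => 2 * ENNReal.ofReal l) (by fun_prop) (φ := 1)
  simpa only [Pi.one_apply, one_mul, setLIntegral_Ioi_indicator_two_mul,
    setLIntegral_one] using this

theorem lintegral_mul_eq_setLIntegral_Ioi_setLIntegral (ν : Measure α) [SFinite ν]
    {φ g : α → ℝ≥0∞} (hφ : Measurable φ) (hg : Measurable g) :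
    ∫⁻ x, φ x * g x ∂ν = ∫⁻ l in Ioi (0:ℝ), ∫⁻ x in {x | ENNReal.ofReal l < g x}, φ x ∂ν := by
  have := lintegral_mul_setLIntegral_Ioi_indicator ν hφ hg measurable_const (w := 1)
  simpa only [setLIntegral_Ioi_indicator_one, Pi.one_apply, one_mul] using this

end LayerCake

theorem ENNReal.lintegral_mul_sq_le {α : Type*} [MeasurableSpace α] (ν : Measure α)
    {φ ψ : α → ℝ≥0∞} (hφ : AEMeasurable φ ν) (hψ : AEMeasurable ψ ν) :
    (∫⁻ x, φ x * ψ x ∂ν) ^ 2 ≤ (∫⁻ x, φ x ^ 2 ∂ν) * ∫⁻ x, ψ x ^ 2 ∂ν := by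
  have hsq (a : ℝ≥0∞) : (a ^ (1 / 2 : ℝ)) ^ 2 = a := by
    rw [← ENNReal.rpow_natCast, ← ENNReal.rpow_mul]; norm_num
  have := ENNReal.lintegral_mul_le_Lp_mul_Lq ν Real.HolderConjugate.two_two hφ hψ
  simp only [Pi.mul_apply, ENNReal.rpow_two] at this
  calc (∫⁻ x, φ x * ψ x ∂ν) ^ 2
      ≤ ((∫⁻ x, φ x ^ 2 ∂ν) ^ (1 / 2 : ℝ) * (∫⁻ x, ψ x ^ 2 ∂ν) ^ (1 / 2 : ℝ)) ^ 2 := by gcongr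
    _ = (∫⁻ x, φ x ^ 2 ∂ν) * ∫⁻ x, ψ x ^ 2 ∂ν := by rw [mul_pow, hsq, hsq]

theorem ENNReal.le_of_sq_le_mul {a c : ℝ≥0∞} (ha : a ≠ ∞) (h : a ^ 2 ≤ c * a) : a ≤ c := by
  rcases eq_or_ne a 0 with rfl | ha0
  · exact zero_le
  · rw [sq] at h
    exact (ENNReal.mul_le_mul_iff_left ha0 ha).1 h

namespace DyadicCarleson

variable {n : ℕ}

def cube (n : ℕ) (k : ℤ) (m : Fin n → ℤ) : Set (EuclideanSpace ℝ (Fin n)) :=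
  {x | ∀ i, (m i : ℝ) * (2:ℝ) ^ k ≤ x i ∧ x i < ((m i : ℝ) + 1) * (2:ℝ) ^ k}

noncomputable def index (k : ℤ) (x : EuclideanSpace ℝ (Fin n)) : Fin n → ℤ :=
  fun i => ⌊x i / (2:ℝ) ^ k⌋

lemma mem_cube_iff {k : ℤ} {m : Fin n → ℤ} {x : EuclideanSpace ℝ (Fin n)} :
    x ∈ cube n k m ↔ index k x = m := by
  have hk : (0:ℝ) < 2 ^ k := zpow_pos two_pos k
  simp only [cube, mem_ofPred_eq, funext_iff, index, Int.floor_eq_iff, le_div_iff₀ hk,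
    div_lt_iff₀ hk]

lemma mem_cube_index (k : ℤ) (x : EuclideanSpace ℝ (Fin n)) : x ∈ cube n k (index k x) :=
  mem_cube_iff.2 rfl

lemma index_of_le {k k' : ℤ} (h : k ≤ k') (x : EuclideanSpace ℝ (Fin n)) :
    index k' x = fun i => index k x i / 2 ^ (k' - k).toNat := by
  have hpow : (2:ℝ) ^ k' = 2 ^ k * ((2 ^ (k' - k).toNat : ℕ) : ℝ) := by
    rw [Nat.cast_pow, Nat.cast_ofNat, ← zpow_natCast, Int.toNat_of_nonneg (by omega),
      ← zpow_add₀ two_ne_zero, add_sub_cancel]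
  funext i
  rw [index, index, hpow, ← div_div, Int.floor_div_natCast, Nat.cast_pow, Nat.cast_ofNat]

lemma measurable_index (k : ℤ) : Measurable (index (n := n) k) :=
  measurable_pi_lambda _ fun i => Int.measurable_floor.comp (by fun_prop)

lemma cube_eq_preimage_index (k : ℤ) (m : Fin n → ℤ) : cube n k m = index k ⁻¹' {m} :=
  Set.ext fun _ => mem_cube_iff

lemma measurableSet_cube (k : ℤ) (m : Fin n → ℤ) : MeasurableSet (cube n k m) := by
  rw [cube_eq_preimage_index]
  exact measurable_index k (measurableSet_singleton m)

lemma volume_cube (k : ℤ) (m : Fin n → ℤ) :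
    volume (cube n k m) = ENNReal.ofReal (((2:ℝ) ^ k) ^ n) := by
  have : cube n k m = (MeasurableEquiv.toLp 2 (Fin n → ℝ)).symm ⁻¹'
      univ.pi fun i => Ico ((m i : ℝ) * 2 ^ k) ((m i + 1) * 2 ^ k) := by
    ext x; simp [cube, mem_pi]
  rw [this, (EuclideanSpace.volume_preserving_symm_measurableEquiv_toLp (Fin n)).measure_preimage
    (MeasurableSet.univ_pi fun _ => measurableSet_Ico).nullMeasurableSet, volume_pi_pi]
  have hlen (a : ℝ) : (a + 1) * 2 ^ k - a * 2 ^ k = (2:ℝ) ^ k := by ring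
  simp only [Real.volume_Ico, hlen, Finset.prod_const, Finset.card_univ, Fintype.card_fin,
    ENNReal.ofReal_pow (zpow_pos two_pos k).le]

lemma volume_cube_ne_zero (k : ℤ) (m : Fin n → ℤ) : volume (cube n k m) ≠ 0 := by
  rw [volume_cube]; positivity

lemma volume_cube_ne_top (k : ℤ) (m : Fin n → ℤ) : volume (cube n k m) ≠ ∞ := by
  rw [volume_cube]; exact ENNReal.ofReal_ne_top

lemma lintegral_eq_tsum_cube (k : ℤ) (g : EuclideanSpace ℝ (Fin n) → ℝ≥0∞) :
    ∫⁻ x, g x = ∑' m, ∫⁻ x in cube n k m, g x := by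
  have hdisj : Pairwise (Function.onFun Disjoint (cube n k)) := fun m m' h =>
    disjoint_left.2 fun x hx hx' => h ((mem_cube_iff.1 hx).symm.trans (mem_cube_iff.1 hx'))
  rw [← lintegral_iUnion (measurableSet_cube k) hdisj,
    iUnion_eq_univ_iff.2 fun x => ⟨_, mem_cube_index k x⟩, Measure.restrict_univ]

section Maximal

variable (φ : EuclideanSpace ℝ (Fin n) → ℝ≥0∞)

noncomputable def average (k : ℤ) (m : Fin n → ℤ) : ℝ≥0∞ :=
  (∫⁻ y in cube n k m, φ y) / volume (cube n k m)

noncomputable def maximalFunction (s : Finset ℤ) (x : EuclideanSpace ℝ (Fin n)) : ℝ≥0∞ :=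
  ⨆ k ∈ s, average φ k (index k x)

lemma average_sq_mul_volume_le (hφ : Measurable φ) (k : ℤ) (m : Fin n → ℤ) :
    average φ k m ^ 2 * volume (cube n k m) ≤ ∫⁻ y in cube n k m, φ y ^ 2 := by
  have hCS :
      (∫⁻ y in cube n k m, φ y) ^ 2 ≤ (∫⁻ y in cube n k m, φ y ^ 2) * volume (cube n k m) := by
    simpa using ENNReal.lintegral_mul_sq_le (volume.restrict (cube n k m)) hφ.aemeasurable
      aemeasurable_const (ψ := fun _ => 1)
  have h0 := volume_cube_ne_zero (n := n) k m
  have htop := volume_cube_ne_top (n := n) k m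
  calc average φ k m ^ 2 * volume (cube n k m)
      = (∫⁻ y in cube n k m, φ y) ^ 2 / volume (cube n k m) := by
        rw [average, div_eq_mul_inv, div_eq_mul_inv, mul_pow, sq (volume _)⁻¹, mul_assoc,
          mul_assoc, ENNReal.inv_mul_cancel h0 htop, mul_one]
    _ ≤ ∫⁻ y in cube n k m, φ y ^ 2 := (ENNReal.div_le_iff h0 htop).2 hCS

lemma lintegral_average_index_sq_le (hφ : Measurable φ) (k : ℤ) :
    ∫⁻ x, average φ k (index k x) ^ 2 ≤ ∫⁻ x, φ x ^ 2 := by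
  rw [lintegral_eq_tsum_cube k, lintegral_eq_tsum_cube k (fun x => φ x ^ 2)]
  refine ENNReal.tsum_le_tsum fun m => ?_
  rw [setLIntegral_congr_fun (measurableSet_cube k m) fun x hx => by rw [mem_cube_iff.1 hx],
    setLIntegral_const]
  exact average_sq_mul_volume_le φ hφ k m

lemma measurable_average_index (k : ℤ) : Measurable fun x => average φ k (index k x) :=
  (measurable_of_countable (average φ k)).comp (measurable_index k)

lemma measurable_maximalFunction (s : Finset ℤ) : Measurable (maximalFunction φ s) :=
  Measurable.biSup _ s.countable_toSet fun k _ => measurable_average_index φ k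

lemma lintegral_maximalFunction_sq_le_card_mul (hφ : Measurable φ) (s : Finset ℤ) :
    ∫⁻ x, maximalFunction φ s x ^ 2 ≤ s.card * ∫⁻ x, φ x ^ 2 := by
  have hpt (x) : maximalFunction φ s x ^ 2 ≤ ∑ k ∈ s, average φ k (index k x) ^ 2 := by
    rw [maximalFunction, ENNReal.iSup₂_pow_of_ne_zero _ two_ne_zero]
    exact iSup₂_le fun k hk => Finset.single_le_sum (f := fun k => average φ k (index k x) ^ 2)
      (fun _ _ => zero_le) hk
  calc ∫⁻ x, maximalFunction φ s x ^ 2 ≤ ∫⁻ x, ∑ k ∈ s, average φ k (index k x) ^ 2 :=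
        lintegral_mono hpt
    _ = ∑ k ∈ s, ∫⁻ x, average φ k (index k x) ^ 2 :=
        lintegral_finsetSum s fun k _ => (measurable_average_index φ k).pow_const 2
    _ ≤ ∑ _k ∈ s, ∫⁻ x, φ x ^ 2 := Finset.sum_le_sum fun k _ => lintegral_average_index_sq_le φ hφ k
    _ = s.card * ∫⁻ x, φ x ^ 2 := by rw [Finset.sum_const, nsmul_eq_mul]

noncomputable def stoppingCubes (s : Finset ℤ) (l : ℝ≥0∞) : Set (ℤ × (Fin n → ℤ)) :=
  {q | q.1 ∈ s ∧ l < average φ q.1 q.2 ∧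
    ∀ x ∈ cube n q.1 q.2, ∀ k ∈ s, q.1 < k → average φ k (index k x) ≤ l}

lemma exists_mem_stoppingCubes {s : Finset ℤ} {l : ℝ≥0∞} {k : ℤ} {x : EuclideanSpace ℝ (Fin n)}
    (hk : k ∈ s) (hl : l < average φ k (index k x)) :
    ∃ q ∈ stoppingCubes φ s l, k ≤ q.1 ∧ x ∈ cube n q.1 q.2 := by
  classical
  set t := s.filter fun k' => k ≤ k' ∧ l < average φ k' (index k' x)
  have hkt : k ∈ t := Finset.mem_filter.2 ⟨hk, le_rfl, hl⟩
  obtain ⟨hKs, hkK, hlK⟩ := Finset.mem_filter.1 (t.max'_mem ⟨k, hkt⟩)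
  refine ⟨(t.max' ⟨k, hkt⟩, index _ x), ⟨hKs, hlK, fun y hy k' hk' hKk' => not_lt.1 fun hl' => ?_⟩,
    hkK, mem_cube_index _ x⟩
  have hyx : index k' y = index k' x := by
    rw [index_of_le hKk'.le, index_of_le hKk'.le, mem_cube_iff.1 hy]
  have hk't : k' ∈ t := Finset.mem_filter.2 ⟨hk', hkK.trans hKk'.le, hyx ▸ hl'⟩
  exact not_le_of_gt hKk' (t.le_max' k' hk't)

lemma pairwiseDisjoint_stoppingCubes (s : Finset ℤ) (l : ℝ≥0∞) :
    (stoppingCubes φ s l).PairwiseDisjoint fun q => cube n q.1 q.2 := by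
  have key : ∀ p ∈ stoppingCubes φ s l, ∀ q ∈ stoppingCubes φ s l, p.1 ≤ q.1 → p ≠ q →
      Disjoint (cube n p.1 p.2) (cube n q.1 q.2) := by
    intro p hp q hq hpq hne
    refine disjoint_left.2 fun x hxp hxq => ?_
    rcases hpq.eq_or_lt with heq | hlt
    · exact hne (Prod.ext heq ((mem_cube_iff.1 hxp).symm.trans (heq ▸ mem_cube_iff.1 hxq)))
    · have := hp.2.2 x hxp q.1 hq.1 hlt
      rw [mem_cube_iff.1 hxq] at this
      exact not_le_of_gt hq.2.1 this
  intro p hp q hq hne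
  rcases le_total p.1 q.1 with h | h
  · exact key p hp q hq h hne
  · exact (key q hq p hp h hne.symm).symm

lemma setOf_lt_maximalFunction (s : Finset ℤ) (l : ℝ≥0∞) :
    {x | l < maximalFunction φ s x} = ⋃ q ∈ stoppingCubes φ s l, cube n q.1 q.2 := by
  ext x
  simp only [maximalFunction, mem_ofPred_eq, lt_iSup_iff, mem_iUnion, exists_prop]
  constructor
  · rintro ⟨k, hk, hl⟩
    obtain ⟨q, hq, -, hxq⟩ := exists_mem_stoppingCubes φ hk hl
    exact ⟨q, hq, hxq⟩
  · rintro ⟨q, hq, hxq⟩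
    exact ⟨q.1, hq.1, mem_cube_iff.1 hxq ▸ hq.2.1⟩

lemma volume_setOf_lt_maximalFunction (s : Finset ℤ) (l : ℝ≥0∞) :
    volume {x | l < maximalFunction φ s x} =
      ∑' q : stoppingCubes φ s l, volume (cube n q.1.1 q.1.2) := by
  rw [setOf_lt_maximalFunction, measure_biUnion (to_countable _)
    (pairwiseDisjoint_stoppingCubes φ s l) fun q _ => measurableSet_cube q.1 q.2]

lemma mul_volume_setOf_lt_maximalFunction_le (s : Finset ℤ) (l : ℝ≥0∞) :
    l * volume {x | l < maximalFunction φ s x} ≤ ∫⁻ x in {x | l < maximalFunction φ s x}, φ x := by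
  rw [volume_setOf_lt_maximalFunction, setOf_lt_maximalFunction,
    lintegral_biUnion₀ (to_countable _) (fun q _ => (measurableSet_cube q.1 q.2).nullMeasurableSet)
      (pairwiseDisjoint_stoppingCubes φ s l).aedisjoint, ← ENNReal.tsum_mul_left]
  refine ENNReal.tsum_le_tsum fun q => ?_
  exact (ENNReal.le_div_iff_mul_le (Or.inl (volume_cube_ne_zero _ _))
    (Or.inl (volume_cube_ne_top _ _))).1 q.2.2.1.le

lemma lintegral_maximalFunction_sq_le_two_mul (hφ : Measurable φ) (s : Finset ℤ) :
    ∫⁻ x, maximalFunction φ s x ^ 2 ≤ 2 * ∫⁻ x, φ x * maximalFunction φ s x := by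
  set M := maximalFunction φ s
  have hM : Measurable M := measurable_maximalFunction φ s
  calc ∫⁻ x, M x ^ 2
      = ∫⁻ l in Ioi (0:ℝ), 2 * ENNReal.ofReal l * volume {x | ENNReal.ofReal l < M x} :=
        lintegral_sq_eq_setLIntegral_Ioi_mul_meas_lt volume hM
    _ ≤ ∫⁻ l in Ioi (0:ℝ), 2 * ∫⁻ x in {x | ENNReal.ofReal l < M x}, φ x := by
        refine lintegral_mono fun l => ?_
        rw [mul_assoc]
        gcongr
        exact mul_volume_setOf_lt_maximalFunction_le φ s _
    _ = 2 * ∫⁻ x, φ x * M x := by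
        rw [lintegral_const_mul' _ _ ENNReal.ofNat_ne_top,
          lintegral_mul_eq_setLIntegral_Ioi_setLIntegral volume hφ hM]

theorem lintegral_maximalFunction_sq_le (hφ : Measurable φ) (s : Finset ℤ) :
    ∫⁻ x, maximalFunction φ s x ^ 2 ≤ 4 * ∫⁻ x, φ x ^ 2 := by
  set M := maximalFunction φ s
  have hM : Measurable M := measurable_maximalFunction φ s
  rcases eq_or_ne (∫⁻ x, φ x ^ 2) ∞ with hφ2 | hφ2
  · simp [hφ2]
  have hM2 : ∫⁻ x, M x ^ 2 ≠ ∞ := ((lintegral_maximalFunction_sq_le_card_mul φ hφ s).trans_lt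
    (ENNReal.mul_lt_top (ENNReal.natCast_lt_top _) hφ2.lt_top)).ne
  refine ENNReal.le_of_sq_le_mul hM2 ?_
  calc (∫⁻ x, M x ^ 2) ^ 2 ≤ (2 * ∫⁻ x, φ x * M x) ^ 2 := by
        gcongr; exact lintegral_maximalFunction_sq_le_two_mul φ hφ s
    _ ≤ 2 ^ 2 * ((∫⁻ x, φ x ^ 2) * ∫⁻ x, M x ^ 2) := by
        rw [mul_pow]
        gcongr
        exact ENNReal.lintegral_mul_sq_le volume hφ.aemeasurable hM.aemeasurable
    _ = 4 * (∫⁻ x, φ x ^ 2) * ∫⁻ x, M x ^ 2 := by norm_num [mul_assoc]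

end Maximal

section Carleson

noncomputable def generation (t : ℝ) : ℤ := ⌊Real.logb 2 t⌋ + 1

lemma lt_two_zpow_generation {t : ℝ} (ht : 0 < t) : t < 2 ^ generation t := by
  have h : Real.logb 2 t < (generation t : ℝ) := by
    push_cast [generation]; exact Int.lt_floor_add_one _
  rwa [Real.logb_lt_iff_lt_rpow one_lt_two ht, Real.rpow_intCast] at h

lemma measurable_generation : Measurable generation :=
  (Int.measurable_floor.comp (Real.measurable_log.div_const _)).add_const 1

variable (φ : EuclideanSpace ℝ (Fin n) → ℝ≥0∞)

noncomputable def scaleAverage (p : EuclideanSpace ℝ (Fin n) × ℝ) : ℝ≥0∞ :=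
  average φ (generation p.2) (index (generation p.2) p.1)

lemma measurable_scaleAverage : Measurable (scaleAverage φ) := by
  have hpow : Measurable fun t => (2:ℝ) ^ generation t :=
    (measurable_of_countable fun k : ℤ => (2:ℝ) ^ k).comp measurable_generation
  have hindex : Measurable fun p : EuclideanSpace ℝ (Fin n) × ℝ => index (generation p.2) p.1 :=
    measurable_pi_lambda _ fun i => Int.measurable_floor.comp
      (((by fun_prop : Measurable fun x : EuclideanSpace ℝ (Fin n) => x i).comp measurable_fst).div
        (hpow.comp measurable_snd))
  have hq : Measurable fun p : EuclideanSpace ℝ (Fin n) × ℝ =>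
      (generation p.2, index (generation p.2) p.1) :=
    (measurable_generation.comp measurable_snd).prodMk hindex
  -- stated separately: elaborating `comp` against `scaleAverage φ` makes `whnf` unfold `average`
  have h := (measurable_of_countable (Function.uncurry (average φ))).comp hq
  exact h

def IsCarleson (μ : Measure (EuclideanSpace ℝ (Fin n) × ℝ)) (c : ℝ≥0∞) : Prop :=
  ∀ k m, μ (cube n k m ×ˢ Ioo 0 (2 ^ k)) ≤ c * volume (cube n k m)

variable {μ : Measure (EuclideanSpace ℝ (Fin n) × ℝ)} {c : ℝ≥0∞}

lemma mem_cube_prod_Ioo_generation {p : EuclideanSpace ℝ (Fin n) × ℝ} (hp : 0 < p.2) :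
    p ∈ cube n (generation p.2) (index (generation p.2) p.1) ×ˢ Ioo 0 (2 ^ generation p.2) :=
  ⟨mem_cube_index _ _, hp, lt_two_zpow_generation hp⟩

lemma IsCarleson.sigmaFinite_restrict (hμ : IsCarleson μ c) (hc : c ≠ ∞) :
    SigmaFinite (μ.restrict {p | 0 < p.2}) := by
  have hpos : MeasurableSet {p : EuclideanSpace ℝ (Fin n) × ℝ | 0 < p.2} :=
    measurableSet_lt measurable_const measurable_snd
  refine Measure.sigmaFinite_of_countable (S := insert {p | p.2 ≤ 0}
    (range fun q : ℤ × (Fin n → ℤ) => cube n q.1 q.2 ×ˢ Ioo 0 (2 ^ q.1)))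
    ((countable_range _).insert _) ?_ ?_
  · rintro _ (rfl | ⟨q, rfl⟩)
    · have hempty : {p : EuclideanSpace ℝ (Fin n) × ℝ | p.2 ≤ 0} ∩ {p | 0 < p.2} = ∅ :=
        eq_empty_of_forall_notMem fun p hp => not_lt_of_ge (show p.2 ≤ 0 from hp.1) hp.2
      simp [Measure.restrict_apply' hpos, hempty]
    · exact (Measure.restrict_apply_le _ _).trans_lt
        ((hμ q.1 q.2).trans_lt (ENNReal.mul_lt_top hc.lt_top (volume_cube_ne_top _ _).lt_top))
  · refine eq_univ_of_forall fun p => ?_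
    rcases le_or_gt p.2 0 with hp | hp
    · exact mem_sUnion_of_mem hp (mem_insert _ _)
    · exact mem_sUnion_of_mem (mem_cube_prod_Ioo_generation hp)
        (mem_insert_of_mem _ ⟨(_, _), rfl⟩)

lemma IsCarleson.measure_restrict_lt_indicator_scaleAverage_le (hμ : IsCarleson μ c)
    (s : Finset ℤ) (l : ℝ≥0∞) :
    μ.restrict {p | 0 < p.2} {p | l < {p | generation p.2 ∈ s}.indicator (scaleAverage φ) p} ≤
      c * volume {x | l < maximalFunction φ s x} := by
  have hsub : {p | l < {p | generation p.2 ∈ s}.indicator (scaleAverage φ) p} ∩ {p | 0 < p.2} ⊆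
      ⋃ q ∈ stoppingCubes φ s l, cube n q.1 q.2 ×ˢ Ioo 0 (2 ^ q.1) := by
    rintro p ⟨hl, hp⟩
    have hs : generation p.2 ∈ s := by
      by_contra hs
      simp [indicator_of_notMem (show p ∉ {p | generation p.2 ∈ s} from hs)] at hl
    rw [mem_ofPred_eq, indicator_of_mem (show p ∈ {p | generation p.2 ∈ s} from hs)] at hl
    obtain ⟨q, hq, hkq, hxq⟩ := exists_mem_stoppingCubes φ hs hl
    refine mem_biUnion hq ⟨hxq, hp, (lt_two_zpow_generation hp).trans_le ?_⟩
    exact zpow_le_zpow_right₀ one_le_two hkq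
  calc μ.restrict {p | 0 < p.2} {p | l < {p | generation p.2 ∈ s}.indicator (scaleAverage φ) p}
      ≤ μ (⋃ q ∈ stoppingCubes φ s l, cube n q.1 q.2 ×ˢ Ioo 0 (2 ^ q.1)) :=
        (Measure.restrict_apply' (measurableSet_lt measurable_const measurable_snd)).trans_le
          (measure_mono hsub)
    _ ≤ ∑' q : stoppingCubes φ s l, μ (cube n q.1.1 q.1.2 ×ˢ Ioo 0 (2 ^ q.1.1)) :=
        measure_biUnion_le μ (to_countable _) _
    _ ≤ ∑' q : stoppingCubes φ s l, c * volume (cube n q.1.1 q.1.2) :=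
        ENNReal.tsum_le_tsum fun q => hμ q.1.1 q.1.2
    _ = c * volume {x | l < maximalFunction φ s x} := by
        rw [ENNReal.tsum_mul_left, volume_setOf_lt_maximalFunction]

lemma measurable_indicator_scaleAverage (s : Finset ℤ) :
    Measurable
      ({p : EuclideanSpace ℝ (Fin n) × ℝ | generation p.2 ∈ s}.indicator (scaleAverage φ)) :=
  (measurable_scaleAverage φ).indicator
    (measurable_generation.comp measurable_snd MeasurableSet.of_discrete)

lemma IsCarleson.lintegral_indicator_scaleAverage_sq_le (hμ : IsCarleson μ c) (hc : c ≠ ∞)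
    (hφ : Measurable φ) (s : Finset ℤ) :
    ∫⁻ p in {p | 0 < p.2}, {p | generation p.2 ∈ s}.indicator (scaleAverage φ) p ^ 2 ∂μ ≤
      4 * c * ∫⁻ x, φ x ^ 2 := by
  have := hμ.sigmaFinite_restrict hc
  calc ∫⁻ p in {p | 0 < p.2}, {p | generation p.2 ∈ s}.indicator (scaleAverage φ) p ^ 2 ∂μ
      = ∫⁻ l in Ioi (0:ℝ), 2 * ENNReal.ofReal l * μ.restrict {p | 0 < p.2}
          {p | ENNReal.ofReal l < {p | generation p.2 ∈ s}.indicator (scaleAverage φ) p} :=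
        lintegral_sq_eq_setLIntegral_Ioi_mul_meas_lt _ (measurable_indicator_scaleAverage φ s)
    _ ≤ ∫⁻ l in Ioi (0:ℝ), 2 * ENNReal.ofReal l *
          (c * volume {x | ENNReal.ofReal l < maximalFunction φ s x}) := by
        gcongr with l
        exact hμ.measure_restrict_lt_indicator_scaleAverage_le φ s _
    _ = c * ∫⁻ x, maximalFunction φ s x ^ 2 := by
        rw [lintegral_sq_eq_setLIntegral_Ioi_mul_meas_lt volume (measurable_maximalFunction φ s),
          ← lintegral_const_mul' _ _ hc]
        simp only [mul_left_comm c]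
    _ ≤ c * (4 * ∫⁻ x, φ x ^ 2) := by gcongr; exact lintegral_maximalFunction_sq_le φ hφ s
    _ = 4 * c * ∫⁻ x, φ x ^ 2 := by rw [mul_left_comm, mul_assoc]

theorem IsCarleson.lintegral_scaleAverage_sq_le (hμ : IsCarleson μ c) (hc : c ≠ ∞)
    (hφ : Measurable φ) :
    ∫⁻ p in {p | 0 < p.2}, scaleAverage φ p ^ 2 ∂μ ≤ 4 * c * ∫⁻ x, φ x ^ 2 := by
  have hsup (p : EuclideanSpace ℝ (Fin n) × ℝ) : scaleAverage φ p ^ 2 =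
      ⨆ s : Finset ℤ, {p | generation p.2 ∈ s}.indicator (scaleAverage φ) p ^ 2 :=
    le_antisymm (le_iSup_of_le {generation p.2} (by simp))
      (iSup_le fun s => pow_le_pow_left₀ zero_le (indicator_le_self _ _ _) 2)
  have hmono : Monotone fun (s : Finset ℤ) p =>
      {p : EuclideanSpace ℝ (Fin n) × ℝ | generation p.2 ∈ s}.indicator (scaleAverage φ) p ^ 2 := by
    intro s t hst p
    dsimp only
    gcongr
  rw [lintegral_congr hsup, lintegral_iSup_directed
    (fun s => ((measurable_indicator_scaleAverage φ s).pow_const 2).aemeasurable)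
    hmono.directed_le]
  exact iSup_le fun s => hμ.lintegral_indicator_scaleAverage_sq_le φ hc hφ s

lemma enorm_smul_setIntegral_cube_le {F : Type*} [NormedAddCommGroup F] [NormedSpace ℝ F]
    (f : EuclideanSpace ℝ (Fin n) → F) (k : ℤ) (m : Fin n → ℤ) :
    ‖(((2:ℝ) ^ k) ^ n)⁻¹ • ∫ y in cube n k m, f y‖ₑ ≤ average (fun y => ‖f y‖ₑ) k m := by
  rw [enorm_smul, Real.enorm_eq_ofReal (by positivity), ENNReal.ofReal_inv_of_pos (by positivity),
    ← volume_cube k m, average, div_eq_mul_inv, mul_comm]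
  gcongr
  exact enorm_integral_le_lintegral_enorm _

end Carleson

end DyadicCarleson

theorem dyadic_carleson_embedding_general
    (n : ℕ) (C : ℝ) (hC : 0 ≤ C)
    (μ : Measure (EuclideanSpace ℝ (Fin n) × ℝ))
    -- the dyadic cubes: `Qc k m` has sidelength `2^k`
    (Qc : ℤ → (Fin n → ℤ) → Set (EuclideanSpace ℝ (Fin n)))
    (hQ : ∀ k m, Qc k m =
      {x | ∀ i, (m i : ℝ) * (2:ℝ) ^ k ≤ x i ∧ x i < ((m i : ℝ) + 1) * (2:ℝ) ^ k})
    -- the Carleson condition `μ(Q × (0, ℓ(Q))) ≤ C|Q|`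
    (hCarl : ∀ k m, μ (Qc k m ×ˢ Set.Ioo (0:ℝ) ((2:ℝ) ^ k)) ≤
      ENNReal.ofReal (C * ((2:ℝ) ^ k) ^ n))
    -- the generation of `t` : `2^(gen t - 1) ≤ t < 2^(gen t)`
    (gen : ℝ → ℤ) (hgen : ∀ t : ℝ, 0 < t → gen t = ⌊Real.logb 2 t⌋ + 1)
    -- the dyadic averaging operators
    (S : (EuclideanSpace ℝ (Fin n) → ℂ) → ℝ → EuclideanSpace ℝ (Fin n) → ℂ)
    (hS : ∀ f t x, S f t x = (((2:ℝ) ^ gen t) ^ n)⁻¹ •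
      ∫ y in Qc (gen t) (fun i => ⌊x i / (2:ℝ) ^ gen t⌋), f y)
    (f : EuclideanSpace ℝ (Fin n) → ℂ) (hfm : Measurable f) :
    ∫⁻ p in {p : EuclideanSpace ℝ (Fin n) × ℝ | 0 < p.2},
        (‖S f p.2 p.1‖₊ : ENNReal) ^ 2 ∂μ ≤
      4 * ENNReal.ofReal C * ∫⁻ x, (‖f x‖₊ : ENNReal) ^ 2 := by
  open DyadicCarleson in
  obtain rfl : Qc = cube n := funext fun k => funext fun m => hQ k m
  have hμ : IsCarleson μ (ENNReal.ofReal C) := fun k m => by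
    rw [volume_cube, ← ENNReal.ofReal_mul hC]
    exact hCarl k m
  have hS_le : ∀ p ∈ {p : EuclideanSpace ℝ (Fin n) × ℝ | 0 < p.2},
      (‖S f p.2 p.1‖₊ : ℝ≥0∞) ^ 2 ≤ scaleAverage (fun y => ‖f y‖ₑ) p ^ 2 := by
    intro p hp
    rw [hS, hgen p.2 hp]
    gcongr
    exact enorm_smul_setIntegral_cube_le f _ _
  calc _ ≤ ∫⁻ p in {p | 0 < p.2}, scaleAverage (fun y => ‖f y‖ₑ) p ^ 2 ∂μ :=
        setLIntegral_mono' (measurableSet_lt measurable_const measurable_snd) hS_le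
    _ ≤ 4 * ENNReal.ofReal C * ∫⁻ x, ‖f x‖ₑ ^ 2 :=
        hμ.lintegral_scaleAverage_sq_le _ ENNReal.ofReal_ne_top hfm.enorm
    _ = 4 * ENNReal.ofReal C * ∫⁻ x, (‖f x‖₊ : ENNReal) ^ 2 := by simp only [enorm_eq_nnnorm]

/-- **dyadic Carleson embedding theorem.** If `μ` is a nonnegative measure
on `ℝⁿ × (0,∞)` with `μ(Q × (0, ℓ(Q))) ≤ C|Q|` for every dyadic cube `Q`, and `Sₜf(x)`
is the average of `f` over the dyadic cube containing `x` of generation matching `t`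
(`ℓ(Q)/2 ≤ t < ℓ(Q)`), then `∫∫ |Sₜf(x)|² dμ(x,t) ≤ 4C‖f‖₂²` for all `f ∈ L²(ℝⁿ)`. -/
theorem dyadic_carleson_embedding
    (n : ℕ) (C : ℝ) (hC : 0 ≤ C)
    (μ : Measure (EuclideanSpace ℝ (Fin n) × ℝ))
    -- the dyadic cubes: `Qc k m` has sidelength `2^k`
    (Qc : ℤ → (Fin n → ℤ) → Set (EuclideanSpace ℝ (Fin n)))
    (hQ : ∀ k m, Qc k m =
      {x | ∀ i, (m i : ℝ) * (2:ℝ) ^ k ≤ x i ∧ x i < ((m i : ℝ) + 1) * (2:ℝ) ^ k})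
    -- the Carleson condition `μ(Q × (0, ℓ(Q))) ≤ C|Q|`
    (hCarl : ∀ k m, μ (Qc k m ×ˢ Set.Ioo (0:ℝ) ((2:ℝ) ^ k)) ≤
      ENNReal.ofReal (C * ((2:ℝ) ^ k) ^ n))
    -- the generation of `t` : `2^(gen t - 1) ≤ t < 2^(gen t)`
    (gen : ℝ → ℤ) (hgen : ∀ t : ℝ, 0 < t → gen t = ⌊Real.logb 2 t⌋ + 1)
    -- the dyadic averaging operators
    (S : (EuclideanSpace ℝ (Fin n) → ℂ) → ℝ → EuclideanSpace ℝ (Fin n) → ℂ)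
    (hS : ∀ f t x, S f t x = (((2:ℝ) ^ gen t) ^ n)⁻¹ •
      ∫ y in Qc (gen t) (fun i => ⌊x i / (2:ℝ) ^ gen t⌋), f y)
    (f : EuclideanSpace ℝ (Fin n) → ℂ) (hfm : Measurable f) (hf : MemLp f 2) :
    ∫⁻ p in {p : EuclideanSpace ℝ (Fin n) × ℝ | 0 < p.2},
        (‖S f p.2 p.1‖₊ : ENNReal) ^ 2 ∂μ ≤
      4 * ENNReal.ofReal C * ∫⁻ x, (‖f x‖₊ : ENNReal) ^ 2 :=
  dyadic_carleson_embedding_general n C hC μ Qc hQ hCarl gen hgen S hS f hfm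
end
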